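/- arXiv:1503.03020 — 2 statements merged into one kernel-verified Lean document; each statement's English description precedes it below -/
import Mathlib

section
/- For all real x ≥ 1, ψ'(x+1) < (e^{2/(x+1)} − e^{−2/x})/4 − 1/(45x⁷) + 7/(90x⁸), where ψ' is the trigamma function. -/
open Real

noncomputable def digamma (x : ℝ) : ℝ := deriv (fun t : ℝ => Real.log (Real.Gamma t)) x

noncomputable def trigamma (x : ℝ) : ℝ := ∑' n : ℕ, 1 / (x + n) ^ 2

noncomputable def gg (y : ℝ) : ℝ :=
  1/y + 1/(2*y^2) + 1/(6*y^3) - 1/(30*y^5) + 1/(42*y^7)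

lemma key1 (z : ℝ) (hz : 1 ≤ z) : 1/z^2 ≤ gg z - gg (z+1) := by
  have hz0 : (0:ℝ) < z := by linarith
  have hz1 : (0:ℝ) < z + 1 := by linarith
  rw [← sub_nonneg]
  have h : gg z - gg (z+1) - 1/z^2
      = ((3/10)*z^4 + (3/5)*z^3 + (7/15)*z^2 + (1/6)*z + 1/42) / (z^7*(z+1)^7) := by
    unfold gg
    field_simp
    ring
  rw [h]
  apply le_of_lt
  apply div_pos
  · nlinarith [pow_pos hz0 4, pow_pos hz0 3, pow_pos hz0 2]
  · exact mul_pos (pow_pos hz0 7) (pow_pos hz1 7)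

lemma gg_nonneg (y : ℝ) (hy : 1 ≤ y) : 0 ≤ gg y := by
  have hy0 : (0:ℝ) < y := by linarith
  have h5 : (0:ℝ) < y^5 := pow_pos hy0 5
  have hle : y ≤ 30*y^5 := by nlinarith [le_self_pow₀ hy (by norm_num : 5 ≠ 0)]
  have h1 : 1/(30*y^5) ≤ 1/y := one_div_le_one_div_of_le hy0 hle
  have h2 : (0:ℝ) < 1/(2*y^2) := by positivity
  have h3 : (0:ℝ) < 1/(6*y^3) := by positivity
  have h4 : (0:ℝ) < 1/(42*y^7) := by positivity
  unfold gg
  linarith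

lemma gg_le (y : ℝ) (hy : 1 ≤ y) : gg y ≤ 4/y := by
  have hy0 : (0:ℝ) < y := by linarith
  have e2 : 1/(2*y^2) ≤ 1/y := one_div_le_one_div_of_le hy0 (by nlinarith)
  have e3 : 1/(6*y^3) ≤ 1/y := one_div_le_one_div_of_le hy0 (by nlinarith [pow_pos hy0 3, le_self_pow₀ hy (by norm_num : 3 ≠ 0)])
  have e7 : 1/(42*y^7) ≤ 1/y := one_div_le_one_div_of_le hy0 (by nlinarith [pow_pos hy0 7, le_self_pow₀ hy (by norm_num : 7 ≠ 0)])
  have e5 : (0:ℝ) < 1/(30*y^5) := by positivity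
  unfold gg
  have : 4/y = 1/y + 1/y + 1/y + 1/y := by ring
  linarith

lemma gg_tendsto (y : ℝ) (hy : 1 ≤ y) :
    Filter.Tendsto (fun n : ℕ => gg (y + n)) Filter.atTop (nhds 0) := by
  have hyn : ∀ n : ℕ, (1:ℝ) ≤ y + n := fun n => le_add_of_le_of_nonneg hy n.cast_nonneg
  have h1 : Filter.Tendsto (fun n : ℕ => y + (n:ℝ)) Filter.atTop Filter.atTop :=
    Filter.tendsto_atTop_add_const_left _ y tendsto_natCast_atTop_atTop
  have h2 : Filter.Tendsto (fun n : ℕ => (y + (n:ℝ))⁻¹) Filter.atTop (nhds 0) :=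
    tendsto_inv_atTop_zero.comp h1
  have h3 : Filter.Tendsto (fun n : ℕ => 4 / (y + (n:ℝ))) Filter.atTop (nhds 0) := by
    have := h2.const_mul (4:ℝ)
    simpa [div_eq_mul_inv] using this
  exact squeeze_zero (fun n => gg_nonneg _ (hyn n)) (fun n => gg_le _ (hyn n)) h3

lemma hasSum_gg (y : ℝ) (hy : 1 ≤ y) :
    HasSum (fun n : ℕ => gg (y + n) - gg (y + n + 1)) (gg y) := by
  have hyn : ∀ n : ℕ, (1:ℝ) ≤ y + n := fun n => le_add_of_le_of_nonneg hy n.cast_nonneg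
  have hnn : ∀ n : ℕ, 0 ≤ gg (y + n) - gg (y + n + 1) := by
    intro n
    have h := key1 (y + n) (hyn n)
    have hp : (0:ℝ) ≤ 1/(y + n)^2 := by positivity
    linarith
  rw [hasSum_iff_tendsto_nat_of_nonneg hnn]
  have hps : ∀ n : ℕ, ∑ i ∈ Finset.range n, (gg (y + i) - gg (y + i + 1)) = gg y - gg (y + n) := by
    intro n
    have h := Finset.sum_range_sub' (fun i : ℕ => gg (y + i)) n
    simp only [Nat.cast_zero, add_zero] at h
    rw [← h]
    apply Finset.sum_congr rfl
    intro i _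
    have hcast : y + (↑(i+1) : ℝ) = y + i + 1 := by push_cast; ring
    rw [hcast]
  have h2 : Filter.Tendsto (fun n : ℕ => gg y - gg (y + n)) Filter.atTop (nhds (gg y)) := by
    have := Filter.Tendsto.sub (tendsto_const_nhds (x := gg y) (f := Filter.atTop (α := ℕ)))
      (gg_tendsto y hy)
    simpa using this
  exact h2.congr fun n => (hps n).symm

lemma trig_le_gg (y : ℝ) (hy : 1 ≤ y) : trigamma y ≤ gg y := by
  have hyn : ∀ n : ℕ, (1:ℝ) ≤ y + n := fun n => le_add_of_le_of_nonneg hy n.cast_nonneg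
  have hs := hasSum_gg y hy
  have hle : ∀ n : ℕ, 1/(y + n)^2 ≤ gg (y + n) - gg (y + n + 1) := fun n => key1 _ (hyn n)
  have hsum1 : Summable (fun n : ℕ => 1/(y + (n:ℝ))^2) :=
    Summable.of_nonneg_of_le (fun n => by positivity) hle hs.summable
  rw [trigamma, ← hs.tsum_eq]
  exact Summable.tsum_le_tsum hle hsum1 hs.summable

lemma exp_ge_poly (t : ℝ) (ht : 0 ≤ t) :
    1 + t + t^2/2 + t^3/6 + t^4/24 + t^5/120 + t^6/720 + t^7/5040 + t^8/40320 + t^9/362880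
      ≤ Real.exp t := by
  have h := Real.sum_le_exp_of_nonneg ht 10
  simp only [Finset.sum_range_succ, Finset.sum_range_zero] at h
  norm_num [Nat.factorial] at h
  linarith

set_option maxHeartbeats 2000000 in
lemma key2 (x : ℝ) (hx : 1 ≤ x) :
    gg (x+1) < ((1 + 2/(x+1) + (2/(x+1))^2/2 + (2/(x+1))^3/6 + (2/(x+1))^4/24 + (2/(x+1))^5/120 + (2/(x+1))^6/720 + (2/(x+1))^7/5040 + (2/(x+1))^8/40320 + (2/(x+1))^9/362880) - (1 + 2/x + (2/x)^2/2 + (2/x)^3/6 + (2/x)^4/24 + (2/x)^5/120 + (2/x)^6/720 + (2/x)^7/5040 + (2/x)^8/40320 + (2/x)^9/362880)⁻¹) / 4 - 1/(45*x^7) + 7/(90*x^8) := by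
  obtain ⟨u, hu, rfl⟩ : ∃ u, 0 ≤ u ∧ x = 1 + u := ⟨x - 1, by linarith, by ring⟩
  have hx0 : (0:ℝ) < 1 + u := by linarith
  have hx1 : (0:ℝ) < 1 + u + 1 := by linarith
  have hne1 : (1+u:ℝ) ≠ 0 := ne_of_gt hx0
  have hne2 : (1+u+1:ℝ) ≠ 0 := ne_of_gt hx1
  have q2 := pow_nonneg hu 2
  have q3 := pow_nonneg hu 3
  have q4 := pow_nonneg hu 4
  have q5 := pow_nonneg hu 5
  have q6 := pow_nonneg hu 6
  have q7 := pow_nonneg hu 7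
  have q8 := pow_nonneg hu 8
  have q9 := pow_nonneg hu 9
  rw [← sub_pos]
  have hA : (1 + 2/(1+u+1) + (2/(1+u+1))^2/2 + (2/(1+u+1))^3/6 + (2/(1+u+1))^4/24 + (2/(1+u+1))^5/120 + (2/(1+u+1))^6/720 + (2/(1+u+1))^7/5040 + (2/(1+u+1))^8/40320 + (2/(1+u+1))^9/362880) = ((789128/567:ℝ) + (1753618/315:ℝ)*u + (3123632/315:ℝ)*u^2 + (92900/9:ℝ)*u^3 + (103784/15:ℝ)*u^4 + (9290/3:ℝ)*u^5 + (2776/3:ℝ)*u^6 + (178:ℝ)*u^7 + (20:ℝ)*u^8 + (1:ℝ)*u^9) / (1+u+1)^9 := by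
    field_simp
    ring
  have hBpos : (0:ℝ) < (20947/2835:ℝ) + (5431/105:ℝ)*u + (51206/315:ℝ)*u^2 + (13522/45:ℝ)*u^3 + (1798/5:ℝ)*u^4 + (866/3:ℝ)*u^5 + (466/3:ℝ)*u^6 + (54:ℝ)*u^7 + (11:ℝ)*u^8 + (1:ℝ)*u^9 := by linarith
  have hBne : ((20947/2835:ℝ) + (5431/105:ℝ)*u + (51206/315:ℝ)*u^2 + (13522/45:ℝ)*u^3 + (1798/5:ℝ)*u^4 + (866/3:ℝ)*u^5 + (466/3:ℝ)*u^6 + (54:ℝ)*u^7 + (11:ℝ)*u^8 + (1:ℝ)*u^9) ≠ 0 := ne_of_gt hBpos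
  have hBeq : (1 + 2/(1+u) + (2/(1+u))^2/2 + (2/(1+u))^3/6 + (2/(1+u))^4/24 + (2/(1+u))^5/120 + (2/(1+u))^6/720 + (2/(1+u))^7/5040 + (2/(1+u))^8/40320 + (2/(1+u))^9/362880) = ((20947/2835:ℝ) + (5431/105:ℝ)*u + (51206/315:ℝ)*u^2 + (13522/45:ℝ)*u^3 + (1798/5:ℝ)*u^4 + (866/3:ℝ)*u^5 + (466/3:ℝ)*u^6 + (54:ℝ)*u^7 + (11:ℝ)*u^8 + (1:ℝ)*u^9) / (1+u)^9 := by
    field_simp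
    ring
  have hBinv : ((1 + 2/(1+u) + (2/(1+u))^2/2 + (2/(1+u))^3/6 + (2/(1+u))^4/24 + (2/(1+u))^5/120 + (2/(1+u))^6/720 + (2/(1+u))^7/5040 + (2/(1+u))^8/40320 + (2/(1+u))^9/362880))⁻¹ = (1+u)^9 / ((20947/2835:ℝ) + (5431/105:ℝ)*u + (51206/315:ℝ)*u^2 + (13522/45:ℝ)*u^3 + (1798/5:ℝ)*u^4 + (866/3:ℝ)*u^5 + (466/3:ℝ)*u^6 + (54:ℝ)*u^7 + (11:ℝ)*u^8 + (1:ℝ)*u^9) := by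
    rw [hBeq, inv_div]
  have hC : gg (1+u+1) = ((5779/70:ℝ) + (1186/5:ℝ)*u + (8519/30:ℝ)*u^2 + (544/3:ℝ)*u^3 + (391/6:ℝ)*u^4 + (25/2:ℝ)*u^5 + (1:ℝ)*u^6) / (1+u+1)^7 := by
    unfold gg
    field_simp
    ring
  rw [hA, hBinv, hC]
  have hEq : (((789128/567:ℝ) + (1753618/315:ℝ)*u + (3123632/315:ℝ)*u^2 + (92900/9:ℝ)*u^3 + (103784/15:ℝ)*u^4 + (9290/3:ℝ)*u^5 + (2776/3:ℝ)*u^6 + (178:ℝ)*u^7 + (20:ℝ)*u^8 + (1:ℝ)*u^9) / (1+u+1)^9 - (1+u)^9 / ((20947/2835:ℝ) + (5431/105:ℝ)*u + (51206/315:ℝ)*u^2 + (13522/45:ℝ)*u^3 + (1798/5:ℝ)*u^4 + (866/3:ℝ)*u^5 + (466/3:ℝ)*u^6 + (54:ℝ)*u^7 + (11:ℝ)*u^8 + (1:ℝ)*u^9)) / 4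
      - 1/(45*(1+u)^7) + 7/(90*(1+u)^8) - ((5779/70:ℝ) + (1186/5:ℝ)*u + (8519/30:ℝ)*u^2 + (544/3:ℝ)*u^3 + (391/6:ℝ)*u^4 + (25/2:ℝ)*u^5 + (1:ℝ)*u^6) / (1+u+1)^7
      = ((6848768176/8037225:ℝ) + (76415018222/8037225:ℝ)*u + (401477766568/8037225:ℝ)*u^2 + (263622052378/1607445:ℝ)*u^3 + (86472142502/229635:ℝ)*u^4 + (5153841565988/8037225:ℝ)*u^5 + (962150677588/1148175:ℝ)*u^6 + (6893470499942/8037225:ℝ)*u^7 + (5589698519626/8037225:ℝ)*u^8 + (133616228644/297675:ℝ)*u^9 + (205667793724/893025:ℝ)*u^10 + (11897859398/127575:ℝ)*u^11 + (8747000462/297675:ℝ)*u^12 + (299119148/42525:ℝ)*u^13 + (1938668/1575:ℝ)*u^14 + (139478/945:ℝ)*u^15 + (21746/2025:ℝ)*u^16 + (998/2835:ℝ)*u^17) / (4 * (1+u)^8 * (1+u+1)^9 * ((20947/2835:ℝ) + (5431/105:ℝ)*u + (51206/315:ℝ)*u^2 + (13522/45:ℝ)*u^3 + (1798/5:ℝ)*u^4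 + (866/3:ℝ)*u^5 + (466/3:ℝ)*u^6 + (54:ℝ)*u^7 + (11:ℝ)*u^8 + (1:ℝ)*u^9)) := by
    field_simp
    ring
  rw [hEq]
  apply div_pos
  · have q10 := pow_nonneg hu 10
    have q11 := pow_nonneg hu 11
    have q12 := pow_nonneg hu 12
    have q13 := pow_nonneg hu 13
    have q14 := pow_nonneg hu 14
    have q15 := pow_nonneg hu 15
    have q16 := pow_nonneg hu 16
    have q17 := pow_nonneg hu 17
    linarith
  · exact mul_pos (mul_pos (mul_pos four_pos (pow_pos hx0 8)) (pow_pos hx1 9)) hBpos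

theorem stmt_7 (x : ℝ) (hx : 1 ≤ x) :
    trigamma (x + 1) <
      (Real.exp (2/(x+1)) - Real.exp (-2/x)) / 4 - 1/(45*x^7) + 7/(90*x^8) := by
  have hx0 : (0:ℝ) < x := by linarith
  have hx1 : (0:ℝ) < x + 1 := by linarith
  have h1 : trigamma (x + 1) ≤ gg (x + 1) := trig_le_gg _ (by linarith)
  have h2 := key2 x hx
  have hT := exp_ge_poly (2/(x+1)) (le_of_lt (div_pos two_pos hx1))
  have hs : (0:ℝ) < 2/x := div_pos two_pos hx0
  have hSle := exp_ge_poly (2/x) (le_of_lt hs)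
  have hS : (0:ℝ) < (1 + 2/x + (2/x)^2/2 + (2/x)^3/6 + (2/x)^4/24 + (2/x)^5/120 + (2/x)^6/720 + (2/x)^7/5040 + (2/x)^8/40320 + (2/x)^9/362880) := by
    have p2 := pow_pos hs 2
    have p3 := pow_pos hs 3
    have p4 := pow_pos hs 4
    have p5 := pow_pos hs 5
    have p6 := pow_pos hs 6
    have p7 := pow_pos hs 7
    have p8 := pow_pos hs 8
    have p9 := pow_pos hs 9
    linarith
  have hQ : Real.exp (-2/x) ≤ ((1 + 2/x + (2/x)^2/2 + (2/x)^3/6 + (2/x)^4/24 + (2/x)^5/120 + (2/x)^6/720 + (2/x)^7/5040 + (2/x)^8/40320 + (2/x)^9/362880))⁻¹ := by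
    rw [show (-2/x : ℝ) = -(2/x) by ring, Real.exp_neg]
    exact inv_anti₀ hS hSle
  linarith
end

section
/- For all real x > 0, the trigamma function satisfies 1/x − 1/(2x²) + 1/(6x³) − 1/(30x⁵) + 1/(42x⁷) − 1/(30x⁹) < ψ'(x+1) < 1/x − 1/(2x²) + 1/(6x³) − 1/(30x⁵) + 1/(42x⁷). -/
/-!
Let `U = trigammaUpper` be the truncated asymptotic series `1/y - 1/(2y²) + … + 1/(42y⁷)` and
`L = trigammaLower = U - 1/(30y⁹)`. Clearing denominators, `U y - U (y+1) - 1/(y+1)²` and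
`1/(y+1)² - (L y - L (y+1))` are rational functions whose numerators have positive coefficients,
so for `y > 0` the increments of `L` and `U` bracket `1/(y+1)²` strictly. As `L` and `U` vanish
at infinity, summing the increments along `x, x+1, x+2, …` telescopes to `L x` and `U x`, while the
terms sum to `ψ'(x+1) = ∑ 1/(x+1+n)²`.
-/

open Real

open Filter Topology Finset

theorem lt_tsum_of_sub_succ_lt {a u : ℕ → ℝ} (ha : Summable a) (hu : Tendsto u atTop (𝓝 0))
    (h : ∀ n, u n - u (n + 1) < a n) : u 0 < ∑' n, a n := by
  set b : ℕ → ℝ := fun n => a n - (u n - u (n + 1))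
  have hb_nonneg : ∀ n, 0 ≤ b n := fun n => (sub_pos.2 (h n)).le
  have hb : HasSum b (∑' n, a n - u 0) := by
    rw [hasSum_iff_tendsto_nat_of_nonneg hb_nonneg]
    have hpartial : Tendsto (fun N => ∑ n ∈ range N, a n - (u 0 - u N)) atTop
        (𝓝 (∑' n, a n - (u 0 - 0))) :=
      ha.hasSum.tendsto_sum_nat.sub (tendsto_const_nhds.sub hu)
    rw [sub_zero] at hpartial
    convert hpartial using 2 with N
    rw [sum_sub_distrib, sum_range_sub']
  have hpos := hb.summable.tsum_pos hb_nonneg 0 (sub_pos.2 (h 0))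
  rw [hb.tsum_eq] at hpos
  linarith

theorem tsum_lt_of_lt_sub_succ {a u : ℕ → ℝ} (ha : Summable a) (hu : Tendsto u atTop (𝓝 0))
    (h : ∀ n, a n < u n - u (n + 1)) : ∑' n, a n < u 0 := by
  have hneg := lt_tsum_of_sub_succ_lt ha.neg (by rw [← neg_zero]; exact hu.neg)
    (u := -u) fun n => by simp only [Pi.neg_apply]; linarith [h n]
  rw [tsum_neg] at hneg
  simpa using hneg

theorem summable_one_div_add_natCast_sq (x : ℝ) : Summable fun n : ℕ => 1 / (x + n) ^ 2 := by
  refine ((Real.summable_one_div_nat_add_rpow x 2).2 one_lt_two).congr fun n => ?_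
  rw [Real.rpow_two, sq_abs, add_comm]

theorem tendsto_one_div_mul_pow_atTop (c : ℝ) {k : ℕ} (hk : k ≠ 0) :
    Tendsto (fun y : ℝ => 1 / (c * y ^ k)) atTop (𝓝 0) := by
  have hpow : Tendsto (fun y : ℝ => (y ^ k)⁻¹) atTop (𝓝 0) :=
    tendsto_inv_atTop_zero.comp (tendsto_pow_atTop hk)
  simpa only [one_div, mul_inv, mul_zero] using hpow.const_mul c⁻¹

section Trigamma

variable {F : ℝ → ℝ} {x : ℝ}

theorem lt_trigamma_add_one (hx : 0 < x) (hF : Tendsto F atTop (𝓝 0))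
    (h : ∀ y, 0 < y → F y - F (y + 1) < 1 / (y + 1) ^ 2) : F x < trigamma (x + 1) := by
  have hu : Tendsto (fun n : ℕ => F (x + n)) atTop (𝓝 0) :=
    hF.comp (tendsto_atTop_add_const_left _ x tendsto_natCast_atTop_atTop)
  have hsum := lt_tsum_of_sub_succ_lt (summable_one_div_add_natCast_sq (x + 1)) hu fun n => by
    rw [Nat.cast_succ, ← add_assoc, add_right_comm x 1]
    exact h (x + n) (by positivity)
  rwa [Nat.cast_zero, add_zero] at hsum

theorem trigamma_add_one_lt (hx : 0 < x) (hF : Tendsto F atTop (𝓝 0))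
    (h : ∀ y, 0 < y → 1 / (y + 1) ^ 2 < F y - F (y + 1)) : trigamma (x + 1) < F x := by
  have hu : Tendsto (fun n : ℕ => F (x + n)) atTop (𝓝 0) :=
    hF.comp (tendsto_atTop_add_const_left _ x tendsto_natCast_atTop_atTop)
  have hsum := tsum_lt_of_lt_sub_succ (summable_one_div_add_natCast_sq (x + 1)) hu fun n => by
    rw [Nat.cast_succ, ← add_assoc, add_right_comm x 1]
    exact h (x + n) (by positivity)
  rwa [Nat.cast_zero, add_zero] at hsum

end Trigamma

noncomputable def trigammaUpper (y : ℝ) : ℝ :=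
  1/y - 1/(2*y^2) + 1/(6*y^3) - 1/(30*y^5) + 1/(42*y^7)

noncomputable def trigammaLower (y : ℝ) : ℝ := trigammaUpper y - 1/(30*y^9)

theorem tendsto_trigammaUpper : Tendsto trigammaUpper atTop (𝓝 0) := by
  have hinv : Tendsto (fun y : ℝ => 1 / y) atTop (𝓝 0) := by
    simpa only [one_div] using tendsto_inv_atTop_zero
  unfold trigammaUpper
  simpa only [sub_zero, add_zero] using
    ((((hinv.sub (tendsto_one_div_mul_pow_atTop 2 two_ne_zero)).add
    (tendsto_one_div_mul_pow_atTop 6 three_ne_zero)).sub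
    (tendsto_one_div_mul_pow_atTop 30 (by norm_num : 5 ≠ 0))).add
    (tendsto_one_div_mul_pow_atTop 42 (by norm_num : 7 ≠ 0)))

theorem tendsto_trigammaLower : Tendsto trigammaLower atTop (𝓝 0) := by
  unfold trigammaLower
  simpa only [sub_zero] using
    tendsto_trigammaUpper.sub (tendsto_one_div_mul_pow_atTop 30 (by norm_num : 9 ≠ 0))

theorem one_div_add_one_sq_lt_trigammaUpper_sub {y : ℝ} (hy : 0 < y) :
    1 / (y + 1) ^ 2 < trigammaUpper y - trigammaUpper (y + 1) := by
  have hgap : trigammaUpper y - trigammaUpper (y + 1) - 1 / (y + 1) ^ 2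
      = (5*y^2 + 45*y^3 + 173*y^4 + 357*y^5 + 413*y^6 + 252*y^7 + 63*y^8)
        / (210*y^9*(y+1)^9) := by
    unfold trigammaUpper
    field_simp
    ring
  rw [← sub_pos, hgap]
  positivity

theorem trigammaLower_sub_lt_one_div_add_one_sq {y : ℝ} (hy : 0 < y) :
    trigammaLower y - trigammaLower (y + 1) < 1 / (y + 1) ^ 2 := by
  have hgap : 1 / (y + 1) ^ 2 - (trigammaLower y - trigammaLower (y + 1))
      = (7 + 63*y + 247*y^2 + 543*y^3 + 709*y^4 + 525*y^5 + 175*y^6)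
        / (210*y^9*(y+1)^9) := by
    unfold trigammaLower trigammaUpper
    field_simp
    ring
  rw [← sub_pos, hgap]
  positivity

theorem stmt_10 (x : ℝ) (hx : 0 < x) :
    1/x - 1/(2*x^2) + 1/(6*x^3) - 1/(30*x^5) + 1/(42*x^7) - 1/(30*x^9) < trigamma (x + 1) ∧
    trigamma (x + 1) < 1/x - 1/(2*x^2) + 1/(6*x^3) - 1/(30*x^5) + 1/(42*x^7) :=
  ⟨lt_trigamma_add_one hx tendsto_trigammaLower fun _ => trigammaLower_sub_lt_one_div_add_one_sq,
    trigamma_add_one_lt hx tendsto_trigammaUpper fun _ => one_div_add_one_sq_lt_trigammaUpper_sub⟩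
end
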